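/- For any state s of Krivine's machine that respects the variable convention, if s reduces via the head-machine transition relation ≻_h (reflexive-transitive closure) to a Krivine normal form k', then k' is a λ-term in head normal form. -/
import Mathlib


/-- Untyped λ-terms with named variables. -/
inductive Lam : Type
  | var : ℕ → Lam
  | app : Lam → Lam → Lam
  | lam : ℕ → Lam → Lam
  deriving DecidableEq

namespace Lam

/-- Substitution of `s` for the variable `x`. -/
def subst : Lam → ℕ → Lam → Lam
  | var y, x, s => if y = x then s else var y
  | app v u, x, s => app (v.subst x s) (u.subst x s)
  | lam y t, x, s => if y = x then lam y t else lam y (t.subst x s)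

/-- One-step β-reduction. -/
inductive Beta : Lam → Lam → Prop
  | beta (x : ℕ) (u t : Lam) : Beta (app (lam x u) t) (u.subst x t)
  | appL {v v' : Lam} (u : Lam) : Beta v v' → Beta (app v u) (app v' u)
  | appR (v : Lam) {u u' : Lam} : Beta u u' → Beta (app v u) (app v u')
  | lam (x : ℕ) {t t' : Lam} : Beta t t' → Beta (lam x t) (lam x t')

/-- One-step head reduction. -/
inductive Head : Lam → Lam → Prop
  | beta (x : ℕ) (u t : Lam) : Head (app (lam x u) t) (u.subst x t)
  | app {v v' : Lam} (u : Lam) :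
      Head v v' → (∀ x w, v ≠ lam x w) → Head (app v u) (app v' u)
  | lam (x : ℕ) {t t' : Lam} : Head t t' → Head (lam x t) (lam x t')

/-- Terms of the shape `(x)t₁…t_p`. -/
inductive HeadApp : Lam → Prop
  | var (x : ℕ) : HeadApp (var x)
  | app {v : Lam} (u : Lam) : HeadApp v → HeadApp (app v u)

/-- Head normal forms: `λx₁…λx_m.(x)t₁…t_p`. -/
inductive HNF : Lam → Prop
  | head {t : Lam} : HeadApp t → HNF t
  | lam (x : ℕ) {t : Lam} : HNF t → HNF (lam x t)

def HeadNormalizable (t : Lam) : Prop :=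
  ∃ t', Relation.ReflTransGen Head t t' ∧ HNF t'

def Normalizable (t : Lam) : Prop :=
  ∃ t', Relation.ReflTransGen Beta t t' ∧ ∀ u, ¬ Beta t' u

/-- The multiset of binding occurrences of variables in a term. -/
def bound : Lam → Multiset ℕ
  | var _ => 0
  | app v u => v.bound + u.bound
  | lam x t => x ::ₘ t.bound

/-- `t` respects the variable convention: every variable is bound at most once. -/
def VC (t : Lam) : Prop := t.bound.Nodup

/-- Free variables. -/
def fv : Lam → Finset ℕ
  | var x => {x}
  | app v u => v.fv ∪ u.fv
  | lam x t => t.fv.erase x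

end Lam

/-! Krivine's machine. -/

mutual
  /-- Closures: a λ-term together with an environment. -/
  inductive Clo : Type
    | mk : Lam → Env → Clo
  /-- Environments: finite partial maps from variables to closures. -/
  inductive Env : Type
    | nil : Env
    | cons : ℕ → Clo → Env → Env
end

def Env.lookup : Env → ℕ → Option Clo
  | .nil, _ => none
  | .cons y c e, x => if x = y then some c else e.lookup x

mutual
  /-- The λ-term `c̄ = t[e]` denoted by a closure. -/
  def Clo.den : Clo → Lam
    | .mk t e => Env.applyEnv e t
  def Env.applyEnv : Env → Lam → Lam
    | .nil, t => t
    | .cons x c e, t => Env.applyEnv e (t.subst x c.den)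
end

mutual
  /-- A closure respects the variable convention. -/
  def Clo.VC : Clo → Prop
    | .mk t e => t.VC ∧ Env.VCfor e t
  def Env.VCfor : Env → Lam → Prop
    | .nil, _ => True
    | .cons x c e, t => Clo.VC c ∧ x ∉ t.bound ∧ Env.VCfor e t
end

/-- A state (a non-empty stack of closures, given as head and tail)
respects the variable convention. -/
def StateVC (c : Clo) (π : List Clo) : Prop := c.VC ∧ ∀ d ∈ π, d.VC

/-- The set `𝒦`: states, λ-terms/head contexts and abstractions over them. -/
inductive K : Type
  | st : Clo → List Clo → K
  | var : ℕ → K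
  | app : K → K → K
  | lam : ℕ → K → K

/-- The embedding of `Λ` into `𝒦`. -/
def Lam.toK : Lam → K
  | .var x => .var x
  | .app v u => .app v.toK u.toK
  | .lam x t => .lam x t.toK

/-- The λ-term `k̄` denoted by an element of `𝒦`. -/
def K.den : K → Lam
  | .st c π => (π.map Clo.den).foldl Lam.app c.den
  | .var x => .var x
  | .app v u => .app v.den u.den
  | .lam x k => .lam x k.den

/-- The transition map `≻_𝕊` on states. -/
inductive StepS : Clo → List Clo → Clo → List Clo → Prop
  | var {x : ℕ} {e : Env} {c : Clo} {π : List Clo} :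
      Env.lookup e x = some c → StepS (.mk (.var x) e) π c π
  | lam {x : ℕ} {u : Lam} {e : Env} {c : Clo} {π : List Clo} :
      StepS (.mk (.lam x u) e) (c :: π) (.mk u (.cons x c e)) π
  | app {v u : Lam} {e : Env} {π : List Clo} :
      StepS (.mk (.app v u) e) π (.mk v e) (.mk u e :: π)

/-- The transition map `≻_h` on `𝒦` (head-normal-form computing machine). -/
inductive StepH : K → K → Prop
  | s {c : Clo} {π : List Clo} {c' : Clo} {π' : List Clo} :
      StepS c π c' π' → StepH (.st c π) (.st c' π')
  | varFree {x : ℕ} {e : Env} {π : List Clo} :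
      Env.lookup e x = none →
      StepH (.st (.mk (.var x) e) π) (Lam.toK ((π.map Clo.den).foldl Lam.app (.var x)))
  | lamEmpty {x : ℕ} {u : Lam} {e : Env} :
      StepH (.st (.mk (.lam x u) e) []) (.lam x (.st (.mk u e) []))
  | underLam (x : ℕ) {k k' : K} : StepH k k' → StepH (.lam x k) (.lam x k')

/-- Krivine normal forms for `≻_h`. -/
def KNF (k : K) : Prop := ∀ k', ¬ StepH k k'

/-- `RunH k n` : the execution of `k` terminates in exactly `n` steps, i.e. `l_h(k) = n`. -/
inductive RunH : K → ℕ → Prop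
  | zero {k : K} : KNF k → RunH k 0
  | succ {k k' : K} {n : ℕ} : StepH k k' → RunH k' n → RunH k (n + 1)

/-- Invariant preserved by the machine. -/
inductive Good : K → Prop
  | st (c : Clo) (π : List Clo) : Good (.st c π)
  | hd {t : Lam} : t.HeadApp → Good t.toK
  | lam (x : ℕ) {k : K} : Good k → Good (.lam x k)

lemma headApp_foldl : ∀ (l : List Lam) {v : Lam}, v.HeadApp → ((l.foldl Lam.app v).HeadApp)
  | [], _, h => h
  | u :: l, _, h => headApp_foldl l (Lam.HeadApp.app u h)

lemma st_steps (c : Clo) (π : List Clo) : ∃ k', StepH (.st c π) k' := by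
  obtain ⟨t, e⟩ := c
  cases t with
  | var x =>
    cases h : e.lookup x with
    | none => exact ⟨_, StepH.varFree h⟩
    | some c => exact ⟨_, StepH.s (StepS.var h)⟩
  | app v u => exact ⟨_, StepH.s StepS.app⟩
  | lam x u =>
    cases π with
    | nil => exact ⟨_, StepH.lamEmpty⟩
    | cons c π => exact ⟨_, StepH.s StepS.lam⟩

lemma headApp_noStep {t : Lam} (h : t.HeadApp) : ∀ k', ¬ StepH t.toK k' := by
  cases h with
  | var x => intro k' hs; simp only [Lam.toK] at hs; cases hs
  | app u hv => intro k' hs; simp only [Lam.toK] at hs; cases hs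

lemma good_step {k k' : K} (hg : Good k) (hs : StepH k k') : Good k' := by
  induction hg generalizing k' with
  | st c π =>
    cases hs with
    | s _ => exact Good.st _ _
    | varFree h => exact Good.hd (headApp_foldl _ (Lam.HeadApp.var _))
    | lamEmpty => exact Good.lam _ (Good.st _ _)
  | hd h => exact absurd hs (headApp_noStep h _)
  | lam x hk ih =>
    cases hs with
    | underLam _ h => exact Good.lam _ (ih h)

lemma good_knf {k : K} (hg : Good k) (hnf : KNF k) : ∃ t : Lam, k = t.toK ∧ t.HNF := by
  induction hg with
  | st c π => obtain ⟨k', h⟩ := st_steps c π; exact absurd h (hnf k')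
  | hd h => exact ⟨_, rfl, Lam.HNF.head h⟩
  | lam x hk ih =>
    obtain ⟨t, rfl, ht⟩ := ih (fun k' h => hnf _ (StepH.underLam x h))
    exact ⟨.lam x t, rfl, Lam.HNF.lam x ht⟩

/-- if a state respecting the variable convention reduces (via `≻_h*`)
to a Krivine normal form `k'`, then `k'` is a λ-term in head normal form. -/
theorem stmt0 (c : Clo) (π : List Clo) (hvc : StateVC c π) (k' : K)
    (hsteps : Relation.ReflTransGen StepH (.st c π) k') (hnf : KNF k') :
    ∃ t' : Lam, k' = t'.toK ∧ t'.HNF := by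
  refine good_knf ?_ hnf
  clear hnf
  induction hsteps with
  | refl => exact Good.st c π
  | tail _ h ih => exact good_step ih h
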